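/- Generalized matrix mutation preserves the rank and the determinant of the exchange matrix: if B̄ = μ_k^g(B) for an n×n integer skew-symmetrizable matrix B, then rank(B̄) = rank(B) and det(B̄) = det(B). -/
import Mathlib

open Matrix

/-- The generalized matrix mutation `μ_k^g` in direction `k`, with parameters `r`. -/
def genMut {n : ℕ} (r : Fin n → ℤ) (k : Fin n)
    (B : Matrix (Fin n) (Fin n) ℤ) : Matrix (Fin n) (Fin n) ℤ :=
  Matrix.of fun i j =>
    if i = k ∨ j = k then -B i j
    else B i j + r k * (B i k * max (-B k j) 0 + max (B i k) 0 * B k j)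

section aux

variable {n : ℕ} (r : Fin n → ℤ) (k : Fin n) (B : Matrix (Fin n) (Fin n) ℤ)

/-- Left factor. -/
def Emat : Matrix (Fin n) (Fin n) ℤ :=
  1 + Matrix.of (fun i p => if p = k then (if i = k then -2 else r k * max (B i k) 0) else 0)

/-- Right factor. -/
def Fmat : Matrix (Fin n) (Fin n) ℤ :=
  1 + Matrix.of (fun q j => if q = k then (if j = k then -2 else r k * max (-B k j) 0) else 0)

lemma Emat_mul (M : Matrix (Fin n) (Fin n) ℤ) (i j : Fin n) :
    (Emat r k B * M) i j = M i j + (if i = k then -2 else r k * max (B i k) 0) * M k j := by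
  rw [Emat, add_mul, one_mul, Matrix.add_apply, Matrix.mul_apply]
  congr 1
  rw [Finset.sum_eq_single k]
  · simp
  · intro b _ hb; simp [hb]
  · simp

lemma mul_Fmat (M : Matrix (Fin n) (Fin n) ℤ) (i j : Fin n) :
    (M * Fmat r k B) i j = M i j + M i k * (if j = k then -2 else r k * max (-B k j) 0) := by
  rw [Fmat, mul_add, mul_one, Matrix.add_apply, Matrix.mul_apply]
  congr 1
  rw [Finset.sum_eq_single k]
  · simp
  · intro b _ hb; simp [hb]
  · simp

lemma Emat_det : (Emat r k B).det = -1 := by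
  have h : Emat r k B = Matrix.updateCol (1 : Matrix (Fin n) (Fin n) ℤ) k
      (fun i => if i = k then -1 else r k * max (B i k) 0) := by
    ext i p
    by_cases hp : p = k <;> by_cases hi : i = k <;>
      simp [Emat, Matrix.updateCol_apply, hp, hi, Matrix.one_apply]
  rw [h, ← Matrix.cramer_apply]
  simp [Matrix.cramer_one]

lemma Fmat_det : (Fmat r k B).det = -1 := by
  have h : (Fmat r k B)ᵀ = Matrix.updateCol (1 : Matrix (Fin n) (Fin n) ℤ) k
      (fun j => if j = k then -1 else r k * max (-B k j) 0) := by
    ext j q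
    by_cases hq : q = k <;> by_cases hj : j = k <;>
      simp [Fmat, Matrix.transpose_apply, Matrix.updateCol_apply, hq, hj, Matrix.one_apply, eq_comm] <;> simp_all [eq_comm]
  rw [← Matrix.det_transpose, h, ← Matrix.cramer_apply]
  simp [Matrix.cramer_one]

lemma genMut_factor (hBkk : B k k = 0) :
    genMut r k B = Emat r k B * B * Fmat r k B := by
  ext i j
  rw [mul_Fmat, Emat_mul, Emat_mul]
  by_cases hi : i = k <;> by_cases hj : j = k <;>
    simp [genMut, hi, hj, hBkk] <;> ring

end aux

/-- generalized matrix mutation preserves the rank and the determinant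
of a skew-symmetrizable integer exchange matrix. -/
theorem genMut_rank_det (n : ℕ) (r : Fin n → ℤ) (hr : ∀ i, 0 < r i) (k : Fin n)
    (B : Matrix (Fin n) (Fin n) ℤ)
    (t : Fin n → ℤ) (ht : ∀ i, 0 < t i)
    (hskew : ((Matrix.diagonal t) * B)ᵀ = -((Matrix.diagonal t) * B)) :
    (genMut r k B).rank = B.rank ∧ (genMut r k B).det = B.det := by
  have hBkk : B k k = 0 := by
    have h := congrFun (congrFun hskew k) k
    simp [Matrix.transpose_apply, Matrix.mul_apply, Matrix.diagonal_apply] at h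
    have h2 : t k * B k k = 0 := by
      have : 2 * (t k * B k k) = 0 := by linarith [h]
      linarith
    rcases mul_eq_zero.mp h2 with h3 | h3
    · exact absurd h3 (ne_of_gt (ht k))
    · exact h3
  have hfac := genMut_factor r k B hBkk
  have hE : IsUnit (Emat r k B).det := by rw [Emat_det]; exact isUnit_one.neg
  have hF : IsUnit (Fmat r k B).det := by rw [Fmat_det]; exact isUnit_one.neg
  constructor
  · rw [hfac, Matrix.rank_mul_eq_left_of_isUnit_det _ _ hF,
      Matrix.rank_mul_eq_right_of_isUnit_det _ _ hE]
  · rw [hfac, Matrix.det_mul, Matrix.det_mul, Emat_det, Fmat_det]; ring
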